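/- The space of derivations of the Bol algebra structure 𝔅₁₀ on ℂ⁴, given by [e₁,e₂]=e₃, [e₁,e₃]=e₄, [e₁,e₂,e₁]=e₃, [e₁,e₂,e₃]=e₄, [e₁,e₃,e₂]=e₄, is a 2-dimensional linear subspace of the endomorphisms of ℂ⁴ (equivalently, the GL₄(ℂ)-orbit of 𝔅₁₀ has dimension 16 − 2 = 14). -/
import Mathlib


open Filter Matrix Topology

/-- ℂ⁴ -/
abbrev V4 : Type := Fin 4 → ℂ

/-- GL₄(ℂ) -/
abbrev GL4 := Matrix.GeneralLinearGroup (Fin 4) ℂ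

/-- structure constants of a bilinear map on ℂ⁴: `μ i j` is the value on `(eᵢ, eⱼ)`. -/
abbrev Bil4 := Fin 4 → Fin 4 → V4

/-- structure constants of a trilinear map on ℂ⁴. -/
abbrev Tril4 := Fin 4 → Fin 4 → Fin 4 → V4

/-- standard basis vectors -/
noncomputable def e4 (k : Fin 4) : V4 := Pi.single k (1 : ℂ)

/-- action of `g ∈ GL₄(ℂ)` on a bilinear map: `(g·μ)(x,y) = g μ(g⁻¹x, g⁻¹y)`,
in structure constants. -/
noncomputable def actBil (g : GL4) (μ : Bil4) : Bil4 := fun i j =>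
  (g : Matrix (Fin 4) (Fin 4) ℂ).mulVec
    (∑ p, ∑ q,
      (((g⁻¹ : GL4) : Matrix (Fin 4) (Fin 4) ℂ) p i *
       ((g⁻¹ : GL4) : Matrix (Fin 4) (Fin 4) ℂ) q j) • μ p q)

/-- action of `g ∈ GL₄(ℂ)` on a trilinear map:
`(g·τ)(x,y,z) = g τ(g⁻¹x, g⁻¹y, g⁻¹z)`, in structure constants. -/
noncomputable def actTril (g : GL4) (τ : Tril4) : Tril4 := fun i j k =>
  (g : Matrix (Fin 4) (Fin 4) ℂ).mulVec
    (∑ p, ∑ q, ∑ r,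
      (((g⁻¹ : GL4) : Matrix (Fin 4) (Fin 4) ℂ) p i *
       ((g⁻¹ : GL4) : Matrix (Fin 4) (Fin 4) ℂ) q j *
       ((g⁻¹ : GL4) : Matrix (Fin 4) (Fin 4) ℂ) r k) • τ p q r)

/-- the bilinear map on ℂ⁴ with structure constants `μ`. -/
noncomputable def bilMap (μ : Bil4) (x y : V4) : V4 :=
  ∑ i, ∑ j, (x i * y j) • μ i j

/-- the trilinear map on ℂ⁴ with structure constants `τ`. -/
noncomputable def trilMap (τ : Tril4) (x y z : V4) : V4 :=
  ∑ i, ∑ j, ∑ k, (x i * y j * z k) • τ i j k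

/-- `D` is a derivation of the pair `(μ,τ)`. -/
def IsDerivation (μ : Bil4) (τ : Tril4) (D : V4 →ₗ[ℂ] V4) : Prop :=
  (∀ x y : V4, D (bilMap μ x y) = bilMap μ (D x) y + bilMap μ x (D y)) ∧
  (∀ x y z : V4, D (trilMap τ x y z) =
    trilMap τ (D x) y z + trilMap τ x (D y) z + trilMap τ x y (D z))

noncomputable def μB10 : Bil4 := fun i j =>
  if i = (0 : Fin 4) ∧ j = (1 : Fin 4) then e4 2
  else if i = (1 : Fin 4) ∧ j = (0 : Fin 4) then -(e4 2)
  else if i = (0 : Fin 4) ∧ j = (2 : Fin 4) then e4 3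
  else if i = (2 : Fin 4) ∧ j = (0 : Fin 4) then -(e4 3)
  else 0

noncomputable def τB10 : Tril4 := fun i j k =>
  if i = (0 : Fin 4) ∧ j = (1 : Fin 4) ∧ k = (0 : Fin 4) then e4 2
  else if i = (1 : Fin 4) ∧ j = (0 : Fin 4) ∧ k = (0 : Fin 4) then -(e4 2)
  else if i = (0 : Fin 4) ∧ j = (1 : Fin 4) ∧ k = (2 : Fin 4) then e4 3
  else if i = (1 : Fin 4) ∧ j = (0 : Fin 4) ∧ k = (2 : Fin 4) then -(e4 3)
  else if i = (0 : Fin 4) ∧ j = (2 : Fin 4) ∧ k = (1 : Fin 4) then e4 3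
  else if i = (2 : Fin 4) ∧ j = (0 : Fin 4) ∧ k = (1 : Fin 4) then -(e4 3)
  else 0

noncomputable def Dgen (c d : ℂ) : V4 →ₗ[ℂ] V4 where
  toFun x := (c * x 0 + d * x 1) • e4 3
  map_add' x y := by
    simp only [Pi.add_apply]; rw [← add_smul]; congr 1; ring
  map_smul' t x := by
    simp only [Pi.smul_apply, smul_eq_mul, RingHom.id_apply, smul_smul]; congr 1; ring

lemma Dgen_combo (c d : ℂ) : c • Dgen 1 0 + d • Dgen 0 1 = Dgen c d := by
  apply LinearMap.ext; intro x
  simp [Dgen, smul_smul]; rw [← add_smul]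

lemma Dgen_isDeriv (c d : ℂ) : IsDerivation μB10 τB10 (Dgen c d) := by
  constructor
  · intro x y
    funext k
    simp [Dgen, bilMap, μB10, e4, Fin.sum_univ_four, Pi.single_apply]
  · intro x y z
    funext k
    simp [Dgen, trilMap, τB10, e4, Fin.sum_univ_four, Pi.single_apply]

set_option maxHeartbeats 1000000 in
lemma derivEq' (D : V4 →ₗ[ℂ] V4) (hD : IsDerivation μB10 τB10 D) :
    ∃ c d : ℂ, Dgen c d = D := by
  obtain ⟨hb, ht⟩ := hD
  have E1_0 := congrFun (hb (e4 0) (e4 1)) 0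
  have E1_1 := congrFun (hb (e4 0) (e4 1)) 1
  have E1_2 := congrFun (hb (e4 0) (e4 1)) 2
  have E1_3 := congrFun (hb (e4 0) (e4 1)) 3
  have E2_0 := congrFun (hb (e4 0) (e4 2)) 0
  have E2_1 := congrFun (hb (e4 0) (e4 2)) 1
  have E2_3 := congrFun (hb (e4 0) (e4 2)) 3
  have E3_3 := congrFun (hb (e4 1) (e4 2)) 3
  have E4_3 := congrFun (hb (e4 0) (e4 3)) 3
  have T1_2 := congrFun (ht (e4 0) (e4 1) (e4 0)) 2
  have T1_3 := congrFun (ht (e4 0) (e4 1) (e4 0)) 3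
  have T2_3 := congrFun (ht (e4 0) (e4 1) (e4 2)) 3
  have T3_3 := congrFun (ht (e4 0) (e4 2) (e4 0)) 3
  have T4_3 := congrFun (ht (e4 0) (e4 1) (e4 1)) 3
  simp [bilMap, trilMap, μB10, τB10, e4, Fin.sum_univ_four, Pi.single_apply] at E1_0 E1_1 E1_2 E1_3 E2_0 E2_1 E2_3 E3_3 E4_3 T1_2 T1_3 T2_3 T3_3 T4_3
  -- entry facts: a i j = D (Pi.single j 1) i
  have a00 : D (Pi.single 0 1) 0 = 0 := by linear_combination E1_2 - T1_2
  have a11 : D (Pi.single 1 1) 1 = 0 := by linear_combination E2_3 - T2_3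
  have a21 : D (Pi.single 1 1) 2 = 0 := by linear_combination (-1/2 : ℂ) * T4_3
  have a20 : D (Pi.single 0 1) 2 = 0 := by linear_combination -T1_3 + E1_3 + a21
  have a10 : D (Pi.single 0 1) 1 = 0 := by linear_combination -T3_3
  have a01 : D (Pi.single 1 1) 0 = 0 := by linear_combination -E3_3
  have a02 : D (Pi.single 2 1) 0 = 0 := by linear_combination E1_0
  have a12 : D (Pi.single 2 1) 1 = 0 := by linear_combination E1_1
  have a22 : D (Pi.single 2 1) 2 = 0 := by linear_combination E1_2 + a00 + a11
  have a32 : D (Pi.single 2 1) 3 = 0 := by linear_combination E1_3 + a21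
  have a03 : D (Pi.single 3 1) 0 = 0 := by linear_combination E2_0
  have a13 : D (Pi.single 3 1) 1 = 0 := by linear_combination E2_1
  have a23 : D (Pi.single 3 1) 2 = 0 := by linear_combination -E4_3
  have a33 : D (Pi.single 3 1) 3 = 0 := by linear_combination E2_3 + a00 + a22
  obtain ⟨c, hc⟩ : ∃ c, D (e4 0) 3 = c := ⟨_, rfl⟩
  obtain ⟨d, hd⟩ : ∃ d, D (e4 1) 3 = d := ⟨_, rfl⟩
  refine ⟨c, d, ?_⟩
  have key : ∀ j, D (e4 j) = Dgen c d (e4 j) := by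
    intro j
    funext i
    fin_cases j <;> fin_cases i <;>
      simp [Dgen, e4, Pi.single_apply, a00, a10, a20, a01, a11, a21, a02, a12, a22, a32,
        a03, a13, a23, a33] <;>
      simp [e4] at hc hd <;> simp [hc, hd]
  apply LinearMap.ext
  intro x
  have hx : x = x 0 • e4 0 + x 1 • e4 1 + x 2 • e4 2 + x 3 • e4 3 := by
    funext i; fin_cases i <;> simp [e4, Pi.single_apply]
  conv_lhs => rw [hx]
  conv_rhs => rw [hx]
  simp only [map_add, _root_.map_smul, key]

/-- the derivations of 𝔅₁₀ form a 2-dimensional subspace of End(ℂ⁴). -/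
theorem stmt16 : ∃ S : Submodule ℂ (V4 →ₗ[ℂ] V4),
    ((S : Set (V4 →ₗ[ℂ] V4)) = {D | IsDerivation μB10 τB10 D}) ∧
    Module.finrank ℂ S = 2 := by
  refine ⟨Submodule.span ℂ {Dgen 1 0, Dgen 0 1}, ?_, ?_⟩
  · ext D
    simp only [SetLike.mem_coe, Set.mem_setOf_eq, Submodule.mem_span_pair]
    constructor
    · rintro ⟨c, d, rfl⟩
      rw [Dgen_combo]
      exact Dgen_isDeriv c d
    · intro hD
      obtain ⟨c, d, h⟩ := derivEq' D hD
      exact ⟨c, d, by rw [Dgen_combo]; exact h⟩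
  · have hr : ({Dgen 1 0, Dgen 0 1} : Set (V4 →ₗ[ℂ] V4)) = Set.range ![Dgen 1 0, Dgen 0 1] := by
      rw [Set.pair_comm]; simp [Matrix.range_cons, Matrix.range_empty]
    rw [hr, finrank_span_eq_card]
    · simp
    · rw [LinearIndependent.pair_iff]
      intro s t h
      have h0 := congrFun (LinearMap.congr_fun h (e4 0)) 3
      have h1 := congrFun (LinearMap.congr_fun h (e4 1)) 3
      simp [Dgen, e4, Pi.single_apply] at h0 h1
      exact ⟨h0, h1⟩
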